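/- arXiv:0903.4290 — 4 statements merged into one kernel-verified Lean document; each statement's English description precedes it below -/
import Mathlib

section
/- If p is odd, then the set of p-th powers of 1-units equals the set of units congruent to 1 modulo p²: {u^p : u ∈ W⁰} = {v ∈ W^× : v − 1 ∈ p²W}. -/
/-!
Writing a 1-unit as `1 + p x`, the binomial theorem gives `(1 + p x)^p = 1 + p² (x + p c(x))`
with `c` a polynomial map, since `p³` divides `C(p, k) p^k` for `2 ≤ k ≤ p` when `p` is odd.
Conversely, to extract a `p`-th root of `1 + p² y` one solves `x = y - p c(x)`; as
`a - b ∣ c(a) - c(b)`, the map `x ↦ y - p c(x)` is a contraction for the `p`-adic topology, and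
the Witt vectors of a perfect field are `p`-adically complete.
-/

/-- The group of 1-units `W⁰ = {u ∈ W^× : u − 1 ∈ pW}` of the Witt vectors `W = W(K)`,
as a subgroup of the unit group `W^×`. -/
noncomputable def oneUnits (p : ℕ) [Fact p.Prime] (K : Type) [Field K] :
    Subgroup (WittVector p K)ˣ where
  carrier := {u | ∃ y : WittVector p K, (u : WittVector p K) - 1 = p * y}
  one_mem' := ⟨0, by simp⟩
  mul_mem' := by
    rintro a b ⟨x, hx⟩ ⟨y, hy⟩
    refine ⟨x * (b : WittVector p K) + y, ?_⟩
    have hab : ((a * b : (WittVector p K)ˣ) : WittVector p K)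
        = (a : WittVector p K) * (b : WittVector p K) := rfl
    rw [hab]
    linear_combination (b : WittVector p K) * hx + hy
  inv_mem' := by
    rintro a ⟨x, hx⟩
    refine ⟨-(((a⁻¹ : (WittVector p K)ˣ) : WittVector p K) * x), ?_⟩
    have h : ((a⁻¹ : (WittVector p K)ˣ) : WittVector p K) * (a : WittVector p K) = 1 := by
      rw [← Units.val_mul, inv_mul_cancel, Units.val_one]
    linear_combination (-((a⁻¹ : (WittVector p K)ˣ) : WittVector p K)) * hx + h

open Finset

theorem IsAdicComplete.exists_fixedPoint {R : Type*} [CommRing R] {I : Ideal R}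
    [IsAdicComplete I R] {f : R → R}
    (hf : ∀ n a b, a - b ∈ I ^ n → f a - f b ∈ I ^ (n + 1)) : ∃ x, f x = x := by
  have hmod (n : ℕ) (a b : R) : a ≡ b [SMOD (I ^ n • ⊤ : Ideal R)] ↔ a - b ∈ I ^ n := by
    rw [SModEq.sub_mem, smul_eq_mul, Ideal.mul_top]
  set x : ℕ → R := fun n => f^[n] 0
  have hstep (n : ℕ) : x (n + 1) - x n ∈ I ^ n := by
    induction n with
    | zero => simp
    | succ n ih =>
      simpa only [x, Function.iterate_succ_apply'] using hf n _ _ ih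
  have hcauchy : AdicCompletion.IsAdicCauchy I R x :=
    (AdicCompletion.isAdicCauchy_iff I R x).mpr fun n => by
      rw [hmod, ← Ideal.neg_mem_iff, neg_sub]
      exact hstep n
  obtain ⟨L, hL⟩ := IsPrecomplete.prec inferInstance hcauchy
  refine ⟨L, IsHausdorff.eq_iff_smodEq.mpr fun n => (hmod n _ _).mpr ?_⟩
  have hfL : f L - f (x n) ∈ I ^ (n + 1) := by
    rw [← Ideal.neg_mem_iff, neg_sub]
    exact hf n _ _ ((hmod n _ _).mp (hL n))
  have hxL : x (n + 1) - L ∈ I ^ (n + 1) := (hmod _ _ _).mp (hL (n + 1))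
  have : f L - L = (f L - f (x n)) + (x (n + 1) - L) := by
    simp only [x, Function.iterate_succ_apply']
    ring
  rw [this]
  exact Ideal.pow_le_pow_right n.le_succ (Ideal.add_mem _ hfL hxL)

section Binomial

variable {p : ℕ} {R : Type*} [CommRing R]

variable (p) in
/-- For odd primes `p` this is `((1 + p x)^p - 1 - p² x) / p³`: the natural-number divisions are
exact by `pow_three_dvd_choose_mul_pow`. -/
noncomputable def binomialTail (x : R) : R :=
  ∑ k ∈ Icc 2 p, ((p.choose k * p ^ k / p ^ 3 : ℕ) : R) * x ^ k

theorem sub_dvd_binomialTail_sub (x y : R) : x - y ∣ binomialTail p x - binomialTail p y := by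
  rw [binomialTail, binomialTail, ← sum_sub_distrib]
  refine dvd_sum fun k _ => ?_
  rw [← mul_sub]
  exact (sub_dvd_pow_sub_pow x y k).mul_left _

variable [hp : Fact p.Prime]

theorem pow_three_dvd_choose_mul_pow (hodd : Odd p) {k : ℕ} (hk : k ∈ Icc 2 p) :
    p ^ 3 ∣ p.choose k * p ^ k := by
  rw [mem_Icc] at hk
  have hp3 : 3 ≤ p := by
    obtain ⟨t, rfl⟩ := hodd
    have := hp.out.two_le
    omega
  rcases hk.2.eq_or_lt with rfl | hlt
  · exact (pow_dvd_pow k hp3).mul_left _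
  · rw [pow_succ']
    exact mul_dvd_mul (hp.out.dvd_choose_self (by omega) hlt) (pow_dvd_pow p hk.1)

theorem one_add_mul_pow_prime (hodd : Odd p) (x : R) :
    (1 + (p : R) * x) ^ p = 1 + (p : R) ^ 2 * (x + p * binomialTail p x) := by
  have htail : ∑ k ∈ Icc 2 p, ((p : R) * x) ^ k * 1 ^ (p - k) * (p.choose k : R)
      = (p : R) ^ 3 * binomialTail p x := by
    rw [binomialTail, mul_sum]
    refine sum_congr rfl fun k hk => ?_
    have hdiv : (p : R) ^ 3 * ((p.choose k * p ^ k / p ^ 3 : ℕ) : R)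
        = p.choose k * (p : R) ^ k := by
      exact_mod_cast congrArg (Nat.cast (R := R))
        (Nat.mul_div_cancel' (pow_three_dvd_choose_mul_pow hodd hk))
    linear_combination -(x ^ k) * hdiv
  rw [add_comm, add_pow, range_eq_Ico, sum_eq_sum_Ico_succ_bot (by omega),
    sum_eq_sum_Ico_succ_bot (by have := hp.out.one_lt; omega), Ico_add_one_right_eq_Icc, htail]
  simp only [zero_add, pow_zero, pow_one, one_pow, Nat.choose_zero_right, Nat.choose_one_right]
  ring

theorem exists_one_add_mul_pow_prime_eq [IsAdicComplete (Ideal.span {(p : R)}) R] (hodd : Odd p)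
    (y : R) : ∃ x : R, (1 + (p : R) * x) ^ p = 1 + (p : R) ^ 2 * y := by
  obtain ⟨x, hx⟩ := IsAdicComplete.exists_fixedPoint (I := Ideal.span {(p : R)})
    (f := fun z => y - p * binomialTail p z) fun n a b hab => by
      simp only [Ideal.span_singleton_pow, Ideal.mem_span_singleton] at hab ⊢
      rw [show y - p * binomialTail p a - (y - p * binomialTail p b)
          = p * (binomialTail p b - binomialTail p a) by ring, pow_succ']
      exact mul_dvd_mul_left _ ((dvd_sub_comm.mp hab).trans (sub_dvd_binomialTail_sub b a))
  refine ⟨x, ?_⟩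
  rw [one_add_mul_pow_prime hodd]
  linear_combination -(p : R) ^ 2 * hx

end Binomial

theorem pow_p_oneUnits_eq_units_one_mod_p_sq_general
    (p : ℕ) [Fact p.Prime] (hodd : Odd p)
    (K : Type) [Field K] [Fintype K] [CharP K p] :
    {v : WittVector p K | ∃ u : oneUnits p K,
        v = ((u : (WittVector p K)ˣ) : WittVector p K) ^ p} =
      {v : WittVector p K | IsUnit v ∧
        ∃ y : WittVector p K, v - 1 = (p : WittVector p K) ^ 2 * y} := by
  ext v
  constructor
  · rintro ⟨⟨u, x, hx⟩, rfl⟩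
    refine ⟨u.isUnit.pow p, x + p * binomialTail p x, ?_⟩
    rw [show (u : WittVector p K) = 1 + p * x by linear_combination hx, one_add_mul_pow_prime hodd]
    ring
  · rintro ⟨hv, y, hy⟩
    obtain ⟨x, hx⟩ := exists_one_add_mul_pow_prime_eq hodd y
    have hxv : (1 + (p : WittVector p K) * x) ^ p = v := by rw [hx, ← hy]; ring
    have hu : IsUnit (1 + (p : WittVector p K) * x) :=
      (isUnit_pow_iff (Fact.out : p.Prime).ne_zero).mp (hxv ▸ hv)
    exact ⟨⟨hu.unit, x, by simp⟩, by rw [IsUnit.unit_spec, hxv]⟩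

/-- If `p` is odd, then the set of `p`-th powers of 1-units equals the set of
units congruent to `1` modulo `p²`: `{u^p : u ∈ W⁰} = {v ∈ W^× : v − 1 ∈ p²W}`. -/
theorem pow_p_oneUnits_eq_units_one_mod_p_sq
    (p n : ℕ) [Fact p.Prime] (hodd : Odd p) (hn : 1 ≤ n)
    (K : Type) [Field K] [Fintype K] [CharP K p] (hK : Fintype.card K = p ^ n) :
    {v : WittVector p K | ∃ u : oneUnits p K,
        v = ((u : (WittVector p K)ˣ) : WittVector p K) ^ p} =
      {v : WittVector p K | IsUnit v ∧
        ∃ y : WittVector p K, v - 1 = (p : WittVector p K) ^ 2 * y} :=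
  pow_p_oneUnits_eq_units_one_mod_p_sq_general p hodd K
end

section
/- Suppose p is odd. Then the set Hom(W⁰, 𝔽_{p^n}) of group homomorphisms from the multiplicative group W⁰ to the additive group of 𝔽_{p^n} is an 𝔽_{p^n}-vector space under pointwise operations, and g_0, g_1, …, g_{n−1} form a basis: every group homomorphism φ : W⁰ → (𝔽_{p^n}, +) can be written uniquely as φ = λ_0·g_0 + λ_1·g_1 + ⋯ + λ_{n−1}·g_{n−1} with λ_i ∈ 𝔽_{p^n}. In particular this Hom-space has dimension n over 𝔽_{p^n}. -/
/-- For `u ∈ W⁰`, writing `u = 1 + p·y` (the witness `y` is unique since `p` is a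
nonzerodivisor in `W`), `g₀ u = π y` where `π` is the residue map (0th Witt coefficient). -/
noncomputable def gZero (p : ℕ) [Fact p.Prime] (K : Type) [Field K]
    (u : oneUnits p K) : K :=
  WittVector.constantCoeff
    (Classical.choose
      (show ∃ y : WittVector p K, ((u : (WittVector p K)ˣ) : WittVector p K) - 1 = p * y
        from u.2))


/-- `gᵢ : W⁰ → 𝔽_{p^n}`, `gᵢ u = (g₀ u)^(pⁱ)`. -/
noncomputable def gIdx (p : ℕ) [Fact p.Prime] (K : Type) [Field K]
    (i : ℕ) (u : oneUnits p K) : K :=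
  gZero p K u ^ p ^ i

/-!
The map `g₀` is a surjective homomorphism from `W⁰` onto the additive group of `𝔽_{p^n}`, and for
odd `p` its kernel `1 + p²W` consists of `p`-th powers: `(1 + p w)^p = 1 + p² (w + p G(w))` for
an integer polynomial `G`, and `w ↦ z - p G(w)` is a `p`-adic contraction, so `w + p G(w) = z`
is solvable for every `z`. A homomorphism `φ : W⁰ → 𝔽_{p^n}` kills `p`-th powers, hence factors as
`ψ ∘ g₀` with `ψ` additive, i.e. `𝔽_p`-linear. The `𝔽_p`-linear endomorphisms of `𝔽_{p^n}` form an
`𝔽_{p^n}`-space of dimension `n` with basis the Frobenius powers `x ↦ x^(p^i)` (Dedekind's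
independence of characters), and precomposition with `g₀` maps this basis to `g₀, …, g_{n-1}`.
-/

section AdicComplete

variable {R : Type*} [CommRing R] (π : R)

theorem smodEq_span_singleton_pow_iff {x y : R} (n : ℕ) :
    x ≡ y [SMOD (Ideal.span {π} ^ n • ⊤ : Submodule R R)] ↔ π ^ n ∣ x - y := by
  rw [SModEq.sub_mem, smul_eq_mul, Ideal.mul_top, Ideal.span_singleton_pow,
    Ideal.mem_span_singleton]

variable [IsAdicComplete (Ideal.span {π}) R]

theorem isUnit_one_add_mul_of_isAdicComplete (y : R) : IsUnit (1 + π * y) := by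
  have hπ : π ∈ (⊥ : Ideal R).jacobson :=
    IsAdicComplete.le_jacobson_bot _ (Ideal.mem_span_singleton_self π)
  simpa [add_comm] using Ideal.mem_jacobson_bot.1 hπ y

theorem exists_add_mul_eq_of_isAdicComplete (F : R → R) (hF : ∀ x y, x - y ∣ F x - F y)
    (z : R) : ∃ w, w + π * F w = z := by
  let s : ℕ → R := fun k => (fun w => z - π * F w)^[k] z
  have hs : ∀ k, s (k + 1) = z - π * F (s k) := fun k => Function.iterate_succ_apply' _ _ _
  have hstep : ∀ k, π ^ k ∣ s (k + 1) - s k := by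
    intro k
    induction k with
    | zero => simp
    | succ k ih =>
      have e : s (k + 2) - s (k + 1) = -(π * (F (s (k + 1)) - F (s k))) := by
        rw [hs, hs]; ring
      rw [e, pow_succ', dvd_neg]
      exact mul_dvd_mul_left π (ih.trans (hF _ _))
  have hcauchy : ∀ m n, m ≤ n → π ^ m ∣ s n - s m := by
    intro m n hmn
    induction n, hmn using Nat.le_induction with
    | base => simp
    | succ n hmn ih =>
      rw [← sub_add_sub_cancel _ (s n)]
      exact dvd_add ((pow_dvd_pow π hmn).trans (hstep n)) ih
  obtain ⟨L, hL⟩ := IsPrecomplete.prec inferInstance (f := s) fun {m n} hmn =>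
    (smodEq_span_singleton_pow_iff π m).2 (dvd_sub_comm.1 (hcauchy m n hmn))
  have hL' : ∀ n, π ^ n ∣ L - s n := fun n =>
    dvd_sub_comm.1 ((smodEq_span_singleton_pow_iff π n).1 (hL n))
  refine ⟨L, sub_eq_zero.1 (IsHausdorff.haus (I := Ideal.span {π}) inferInstance _ fun n => ?_)⟩
  rw [smodEq_span_singleton_pow_iff, sub_zero]
  have e : L + π * F L - z = (L - s (n + 1)) + π * (F L - F (s n)) := by rw [hs]; ring
  rw [e]
  exact dvd_add ((pow_dvd_pow π n.le_succ).trans (hL' (n + 1)))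
    (dvd_mul_of_dvd_right ((hL' n).trans (hF _ _)) π)

end AdicComplete

section OddPrime

variable {p : ℕ}

theorem prime_pow_three_dvd_choose_mul_pow (hp : p.Prime) (hodd : Odd p) {k : ℕ} (hk : 2 ≤ k) :
    p ^ 3 ∣ p.choose k * p ^ k := by
  obtain rfl | hk := hk.eq_or_lt
  · have h2 : 2 < p := hp.two_le.lt_of_ne (by rintro rfl; norm_num at hodd)
    rw [pow_succ']
    exact mul_dvd_mul (hp.dvd_choose_self two_ne_zero h2) dvd_rfl
  · exact dvd_mul_of_dvd_right (pow_dvd_pow p hk) _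

theorem pow_three_dvd_one_add_mul_pow_sub {S : Type*} [CommRing S] (hp : p.Prime) (hodd : Odd p)
    (x : S) : (p : S) ^ 3 ∣ (1 + p * x) ^ p - (1 + p ^ 2 * x) := by
  obtain ⟨m, hm⟩ : ∃ m, p + 1 = m + 2 := ⟨p - 1, by have := hp.two_le; omega⟩
  have e : (1 + p * x) ^ p - (1 + p ^ 2 * x)
      = ∑ k ∈ Finset.range m, ((p.choose (k + 2) * p ^ (k + 2) : ℕ) : S) * x ^ (k + 2) := by
    rw [add_comm, add_pow, hm, Finset.sum_range_succ', Finset.sum_range_succ', add_assoc]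
    have hlow : (p * x) ^ (0 + 1) * 1 ^ (p - (0 + 1)) * (p.choose (0 + 1) : S)
        + (p * x) ^ 0 * 1 ^ (p - 0) * (p.choose 0 : S) = 1 + p ^ 2 * x := by
      simp only [zero_add, one_pow, mul_one, pow_one, pow_zero, Nat.choose_one_right,
        Nat.choose_zero_right, Nat.cast_one]
      ring
    rw [hlow, add_sub_cancel_right]
    exact Finset.sum_congr rfl fun k _ => by push_cast; ring
  rw [e, ← Nat.cast_pow]
  exact Finset.dvd_sum fun k _ => dvd_mul_of_dvd_left
    (Nat.cast_dvd_cast (prime_pow_three_dvd_choose_mul_pow (k := k + 2) hp hodd (by omega))) _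

theorem exists_one_add_mul_pow_eq_one_add_sq_mul {R : Type*} [CommRing R]
    [IsAdicComplete (Ideal.span {(p : R)}) R] (hp : p.Prime) (hodd : Odd p) (z : R) :
    ∃ w : R, (1 + p * w) ^ p = 1 + p ^ 2 * z := by
  obtain ⟨G, hG⟩ := pow_three_dvd_one_add_mul_pow_sub (S := Polynomial R) hp hodd Polynomial.X
  obtain ⟨w, rfl⟩ := exists_add_mul_eq_of_isAdicComplete (p : R) (fun w => G.eval w)
    (fun x y => Polynomial.sub_dvd_eval_sub x y G) z
  refine ⟨w, ?_⟩
  have hw := congrArg (Polynomial.eval w) hG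
  simp only [Polynomial.eval_sub, Polynomial.eval_pow, Polynomial.eval_add, Polynomial.eval_mul,
    Polynomial.eval_one, Polynomial.eval_natCast, Polynomial.eval_X] at hw
  linear_combination hw

end OddPrime

section FiniteField

open FiniteField Module

variable (F L : Type*) [Field F] [Fintype F] [Field L] [Algebra F L] [Finite L]

theorem linearIndependent_frobeniusAlgHom_pow :
    LinearIndependent L fun i : Fin (finrank F L) => (frobeniusAlgHom F L ^ (i : ℕ)).toLinearMap :=
  (linearIndependent_algHom_toLinearMap F L L).comp _ (bijective_frobeniusAlgHom_pow F L).1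

noncomputable def frobeniusPowBasis : Basis (Fin (finrank F L)) L (L →ₗ[F] L) :=
  have : Nonempty (Fin (finrank F L)) := ⟨⟨0, finrank_pos⟩⟩
  basisOfLinearIndependentOfCardEqFinrank (linearIndependent_frobeniusAlgHom_pow F L)
    (by rw [Fintype.card_fin, finrank_linearMap_self])

theorem frobeniusPowBasis_apply (i : Fin (finrank F L)) (x : L) :
    frobeniusPowBasis F L i x = x ^ Fintype.card F ^ (i : ℕ) := by
  have : Nonempty (Fin (finrank F L)) := ⟨i⟩
  rw [frobeniusPowBasis, coe_basisOfLinearIndependentOfCardEqFinrank, AlgHom.toLinearMap_apply,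
    AlgHom.coe_pow, coe_frobeniusAlgHom, pow_iterate]

end FiniteField

section OneUnits

open WittVector

variable (p : ℕ) [Fact p.Prime] (K : Type) [Field K] [CharP K p]

local notation "𝕎" => WittVector p K

theorem gZero_eq (u : oneUnits p K) {y : 𝕎} (hy : ((u : (𝕎)ˣ) : 𝕎) - 1 = p * y) :
    gZero p K u = constantCoeff y :=
  congrArg constantCoeff <|
    mul_left_cancel₀ (p_nonzero p K) ((Classical.choose_spec u.2).symm.trans hy)

variable [PerfectRing K p]

noncomputable def oneAddPMul (y : 𝕎) : oneUnits p K :=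
  ⟨(isUnit_one_add_mul_of_isAdicComplete (p : 𝕎) y).unit, y, by simp⟩

@[simp]
theorem coe_oneAddPMul (y : 𝕎) : ((oneAddPMul p K y : (𝕎)ˣ) : 𝕎) = 1 + p * y := rfl

theorem oneAddPMul_surjective : Function.Surjective (oneAddPMul p K) := by
  intro u
  obtain ⟨y, hy⟩ := u.2
  exact ⟨y, Subtype.ext (Units.ext (by rw [coe_oneAddPMul, ← hy, add_sub_cancel]))⟩

theorem gZero_oneAddPMul (y : 𝕎) : gZero p K (oneAddPMul p K y) = constantCoeff y :=
  gZero_eq p K _ (by rw [coe_oneAddPMul, add_sub_cancel_left])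

theorem oneAddPMul_mul_oneAddPMul (x y : 𝕎) :
    oneAddPMul p K x * oneAddPMul p K y = oneAddPMul p K (x + y + p * x * y) :=
  Subtype.ext (Units.ext (by simp only [Subgroup.coe_mul, Units.val_mul, coe_oneAddPMul]; ring))

theorem gZero_mul (u v : oneUnits p K) : gZero p K (u * v) = gZero p K u + gZero p K v := by
  obtain ⟨x, rfl⟩ := oneAddPMul_surjective p K u
  obtain ⟨y, rfl⟩ := oneAddPMul_surjective p K v
  rw [oneAddPMul_mul_oneAddPMul, gZero_oneAddPMul, gZero_oneAddPMul, gZero_oneAddPMul, map_add,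
    map_add, map_mul, map_mul, map_natCast, CharP.cast_eq_zero, zero_mul, zero_mul, add_zero]

theorem gIdx_mul (i : ℕ) (u v : oneUnits p K) :
    gIdx p K i (u * v) = gIdx p K i u + gIdx p K i v := by
  rw [gIdx, gIdx, gIdx, gZero_mul, add_pow_char_pow]

theorem gZero_surjective : Function.Surjective (gZero p K) := fun a =>
  ⟨oneAddPMul p K (teichmuller p a), by
    rw [gZero_oneAddPMul, constantCoeff_apply, teichmuller_coeff_zero]⟩

theorem exists_pow_eq_of_gZero_eq_zero (hodd : Odd p) {u : oneUnits p K} (hu : gZero p K u = 0) :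
    ∃ v : oneUnits p K, v ^ p = u := by
  obtain ⟨y, rfl⟩ := oneAddPMul_surjective p K u
  rw [gZero_oneAddPMul, ← RingHom.mem_ker, ker_constantCoeff, Ideal.mem_span_singleton] at hu
  obtain ⟨z, rfl⟩ := hu
  obtain ⟨w, hw⟩ := exists_one_add_mul_pow_eq_one_add_sq_mul (Fact.out : p.Prime) hodd z
  refine ⟨oneAddPMul p K w, Subtype.ext (Units.ext ?_)⟩
  simp only [SubmonoidClass.coe_pow, Units.val_pow_eq_pow_val, coe_oneAddPMul, hw]
  ring

end OneUnits

section Homomorphisms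

variable (p : ℕ) [Fact p.Prime] (K : Type) [Field K]

noncomputable def precompGZero [Algebra (ZMod p) K] :
    (K →ₗ[ZMod p] K) →ₗ[K] (oneUnits p K → K) :=
  LinearMap.funLeft K K (gZero p K) ∘ₗ LinearMap.ltoFun (ZMod p) K K K

theorem precompGZero_apply [Algebra (ZMod p) K] (ψ : K →ₗ[ZMod p] K) :
    precompGZero p K ψ = ψ ∘ gZero p K := rfl

variable [CharP K p] [PerfectRing K p]

theorem apply_eq_apply_of_gZero_eq (hodd : Odd p) {φ : oneUnits p K → K}
    (hφ : ∀ u v, φ (u * v) = φ u + φ v) {u v : oneUnits p K} (huv : gZero p K u = gZero p K v) :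
    φ u = φ v := by
  let f : Additive (oneUnits p K) →+ K := AddMonoidHom.mk' (fun a => φ a.toMul) fun _ _ => hφ _ _
  have hker : gZero p K (u⁻¹ * v) = 0 := by
    have h := gZero_mul p K u (u⁻¹ * v)
    rw [mul_inv_cancel_left, huv, left_eq_add] at h
    exact h
  obtain ⟨w, hw⟩ := exists_pow_eq_of_gZero_eq_zero p K hodd hker
  have hφ0 : φ (u⁻¹ * v) = 0 := by
    rw [← hw]
    change f (.ofMul (w ^ p)) = 0
    rw [ofMul_pow, map_nsmul, nsmul_eq_mul, CharP.cast_eq_zero, zero_mul]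
  calc φ u = φ (u * (u⁻¹ * v)) := by rw [hφ, hφ0, add_zero]
    _ = φ v := by rw [mul_inv_cancel_left]

theorem exists_addMonoidHom_eq_comp_gZero (hodd : Odd p) {φ : oneUnits p K → K}
    (hφ : ∀ u v, φ (u * v) = φ u + φ v) : ∃ ψ : K →+ K, φ = ψ ∘ gZero p K := by
  have hs := gZero_surjective p K
  have hφs : ∀ u, φ u = φ (Function.surjInv hs (gZero p K u)) := fun u =>
    apply_eq_apply_of_gZero_eq p K hodd hφ (Function.surjInv_eq hs _).symm
  refine ⟨AddMonoidHom.mk' (φ ∘ Function.surjInv hs) fun a b => ?_, funext hφs⟩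
  rw [Function.comp_apply, Function.comp_apply, Function.comp_apply, ← hφ,
    hφs (_ * _), gZero_mul, Function.surjInv_eq hs, Function.surjInv_eq hs]

variable [Algebra (ZMod p) K]

theorem precompGZero_injective : Function.Injective (precompGZero p K) :=
  (LinearMap.funLeft_injective_of_surjective K K _ (gZero_surjective p K)).comp
    DFunLike.coe_injective

theorem mem_range_precompGZero_iff (hodd : Odd p) (φ : oneUnits p K → K) :
    φ ∈ LinearMap.range (precompGZero p K) ↔ ∀ u v, φ (u * v) = φ u + φ v := by
  constructor
  · rintro ⟨ψ, rfl⟩ u v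
    simp only [precompGZero_apply, Function.comp_apply, gZero_mul, map_add]
  · intro hφ
    obtain ⟨ψ, rfl⟩ := exists_addMonoidHom_eq_comp_gZero p K hodd hφ
    exact ⟨ψ.toZModLinearMap p, rfl⟩

end Homomorphisms

theorem hom_oneUnits_basis_gIdx_general
    (p n : ℕ) [Fact p.Prime] (hodd : Odd p)
    (K : Type) [Field K] [Fintype K] [CharP K p] (hK : Fintype.card K = p ^ n) :
    (∀ i : Fin n, ∀ u v : oneUnits p K,
      gIdx p K (i : ℕ) (u * v) = gIdx p K (i : ℕ) u + gIdx p K (i : ℕ) v) ∧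
    (∀ φ : oneUnits p K → K, (∀ u v : oneUnits p K, φ (u * v) = φ u + φ v) →
      ∃! lam : Fin n → K, φ = fun u => ∑ i : Fin n, lam i * gIdx p K (i : ℕ) u) ∧
    ∃ S : Submodule K (oneUnits p K → K),
      (S : Set (oneUnits p K → K))
          = {φ : oneUnits p K → K | ∀ u v : oneUnits p K, φ (u * v) = φ u + φ v} ∧
      Module.finrank K S = n := by
  let := ZMod.algebra K p
  obtain rfl : Module.finrank (ZMod p) K = n := by
    rw [Module.card_eq_pow_finrank (K := ZMod p), ZMod.card] at hK
    exact Nat.pow_right_injective (Fact.out : p.Prime).two_le hK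
  set b := frobeniusPowBasis (ZMod p) K
  set Φ := precompGZero p K
  have hΦb : ∀ lam, Φ (b.equivFun.symm lam) = fun u => ∑ i, lam i * gIdx p K i u := by
    intro lam
    funext u
    simp only [Φ, b, Module.Basis.equivFun_symm_apply, map_sum, map_smul, Finset.sum_apply,
      Pi.smul_apply, precompGZero_apply, Function.comp_apply, frobeniusPowBasis_apply, ZMod.card,
      smul_eq_mul, gIdx]
  refine ⟨fun i => gIdx_mul p K i, fun φ hφ => ?_, LinearMap.range Φ,
    Set.ext (mem_range_precompGZero_iff p K hodd), ?_⟩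
  · obtain ⟨ψ, rfl⟩ := (mem_range_precompGZero_iff p K hodd φ).2 hφ
    refine ⟨b.equivFun ψ, by simpa only [LinearEquiv.symm_apply_apply] using hΦb (b.equivFun ψ),
      fun lam (h : Φ ψ = _) => ?_⟩
    rw [← hΦb] at h
    exact b.equivFun.symm_apply_eq.1 (precompGZero_injective p K h).symm
  · rw [LinearMap.finrank_range_of_inj (precompGZero_injective p K),
      Module.finrank_linearMap_self]

/-- For `p` odd, the set of group homomorphisms from the multiplicative group
`W⁰` to the additive group of `𝔽_{p^n}` is an `𝔽_{p^n}`-vector space under pointwise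
operations, and `g₀, …, g_{n−1}` form a basis: every such homomorphism `φ` is uniquely
`φ = λ₀·g₀ + ⋯ + λ_{n−1}·g_{n−1}`; in particular the Hom-space has dimension `n`. -/
theorem hom_oneUnits_basis_gIdx
    (p n : ℕ) [Fact p.Prime] (hodd : Odd p) (hn : 1 ≤ n)
    (K : Type) [Field K] [Fintype K] [CharP K p] (hK : Fintype.card K = p ^ n) :
    (∀ i : Fin n, ∀ u v : oneUnits p K,
      gIdx p K (i : ℕ) (u * v) = gIdx p K (i : ℕ) u + gIdx p K (i : ℕ) v) ∧
    (∀ φ : oneUnits p K → K, (∀ u v : oneUnits p K, φ (u * v) = φ u + φ v) →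
      ∃! lam : Fin n → K, φ = fun u => ∑ i : Fin n, lam i * gIdx p K (i : ℕ) u) ∧
    ∃ S : Submodule K (oneUnits p K → K),
      (S : Set (oneUnits p K → K))
          = {φ : oneUnits p K → K | ∀ u v : oneUnits p K, φ (u * v) = φ u + φ v} ∧
      Module.finrank K S = n :=
  hom_oneUnits_basis_gIdx_general p n hodd K hK
end

section
/- The set D_n = {A(a) : a ∈ W^n} of twisted-circulant matrices is a subring of the n×n matrix ring over W: it contains the identity matrix (which is A(1, 0, …, 0)), is closed under addition and negation (A(a) + A(b) = A(a + b)), and is closed under matrix multiplication (for all a, b ∈ W^n there exists c ∈ W^n with A(a)·A(b) = A(c)). -/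
/-!
The entries of `A(a)` depend only on `i - j` in `ℤ/n`, up to the twist `σ^{-i}` and a factor `p`
above the diagonal. Reindexing `(A(a) A(b))_{ij} = ∑_k A(a)_{ik} A(b)_{kj}` by `m = i - k` puts it
in the same shape: `σ^{-i} σ^{m} = σ^{-k}` because `σ^n = 1` (Frobenius on a field with `p^n`
elements), and `p^{[k > i]} p^{[j > k]} = p^{[j > i]} p^{[i-k > i-j]}`, both exponents counting
the wrap-arounds modulo `n`. Only `σ^n = 1` and `σ p = p` enter, so the computation works for any
ring automorphism `σ` with `σ^n = 1` and any `σ`-fixed `π` in place of `p`.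
-/

/-- The Frobenius automorphism `σ` of `W = W(K)`, induced by functoriality of Witt vectors
from the Frobenius automorphism `x ↦ x^p` of the finite field `K`. -/
noncomputable def wittFrob (p : ℕ) [Fact p.Prime]
    (K : Type) [Field K] [Fintype K] [CharP K p] : RingAut (WittVector p K) :=
  RingEquiv.ofRingHom (WittVector.map ((frobeniusEquiv K p : K ≃+* K) : K →+* K))
    (WittVector.map (((frobeniusEquiv K p).symm : K ≃+* K) : K →+* K))
    (by
      apply RingHom.ext
      intro x
      apply WittVector.ext
      intro k
      simp [WittVector.map_coeff])
    (by
      apply RingHom.ext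
      intro x
      apply WittVector.ext
      intro k
      simp [WittVector.map_coeff])

/-- The "twisted-circulant" matrix `A(a)` of a tuple `a = (a_0, …, a_{n−1}) ∈ Wⁿ`:
`A(a)_{ij} = σ^{−i}(a_{i−j})` for `i ≥ j` and `A(a)_{ij} = p·σ^{−i}(a_{n+i−j})` for `i < j`
(the index `i − j` resp. `n + i − j` is subtraction modulo `n`, i.e. subtraction in `Fin n`). -/
noncomputable def twc (p : ℕ) [Fact p.Prime]
    (K : Type) [Field K] [Fintype K] [CharP K p] (n : ℕ)
    (a : Fin n → WittVector p K) : Matrix (Fin n) (Fin n) (WittVector p K) :=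
  Matrix.of fun i j =>
    if (j : ℕ) ≤ (i : ℕ) then ((wittFrob p K)⁻¹ ^ (i : ℕ)) (a (i - j))
    else (p : WittVector p K) * (((wittFrob p K)⁻¹ ^ (i : ℕ)) (a (i - j)))

lemma pow_val_sub_of_pow_eq_one {G : Type*} [Group G] {g : G} {n : ℕ} (hg : g ^ n = 1)
    (i k : Fin n) : g ^ ((i - k : Fin n) : ℕ) = g ^ (i : ℕ) * (g ^ (k : ℕ))⁻¹ := by
  rcases le_or_gt k i with hki | hik
  · rw [Fin.sub_val_of_le hki, pow_sub _ hki]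
  · rw [Fin.coe_sub_iff_lt.mpr hik, pow_sub _ (by omega), pow_add, hg, one_mul]

lemma Fin.coe_sub_eq_ite {n : ℕ} (a b : Fin n) :
    ((a - b : Fin n) : ℕ) = if b ≤ a then (a : ℕ) - b else n + a - b := by
  split_ifs with h
  · exact Fin.sub_val_of_le h
  · exact Fin.coe_sub_iff_lt.mpr (not_le.mp h)

lemma RingAut.inv_pow_apply_eq_self {R : Type*} [Semiring R] {σ : RingAut R} {x : R}
    (hx : σ x = x) (m : ℕ) : (σ⁻¹ ^ m) x = x :=
  pow_mem (inv_mem (show σ ∈ MulAction.stabilizer (RingAut R) x from hx)) m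

section TwistedCirculant

variable {R : Type*} [CommRing R] {n : ℕ}

def twistFactor (π : R) (i j : Fin n) : R := if j ≤ i then 1 else π

lemma twistFactor_mul_twistFactor (π : R) (i j k : Fin n) :
    twistFactor π i k * twistFactor π k j = twistFactor π i j * twistFactor π (i - j) (i - k) := by
  have := i.isLt; have := j.isLt; have := k.isLt
  simp only [twistFactor, Fin.le_def, Fin.coe_sub_eq_ite]
  split_ifs <;> first | ring1 | omega

lemma apply_twistFactor {σ : RingAut R} {π : R} (hπ : σ π = π) (i j : Fin n) :
    σ (twistFactor π i j) = twistFactor π i j := by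
  unfold twistFactor
  split_ifs
  exacts [map_one σ, hπ]

variable (σ : RingAut R) (π : R)

def twistedCirculant (a : Fin n → R) : Matrix (Fin n) (Fin n) R :=
  Matrix.of fun i j => twistFactor π i j * (σ⁻¹ ^ (i : ℕ)) (a (i - j))

def twistedMul (a b : Fin n → R) : Fin n → R :=
  fun t => ∑ m, twistFactor π t m * (a m * (σ ^ (m : ℕ)) (b (t - m)))

lemma twistedCirculant_add (a b : Fin n → R) :
    twistedCirculant σ π (a + b) = twistedCirculant σ π a + twistedCirculant σ π b := by
  ext i j
  simp only [twistedCirculant, Matrix.of_apply, Matrix.add_apply, Pi.add_apply, map_add, mul_add]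

lemma twistedCirculant_neg (a : Fin n → R) :
    twistedCirculant σ π (-a) = -twistedCirculant σ π a := by
  ext i j
  simp only [twistedCirculant, Matrix.of_apply, Matrix.neg_apply, Pi.neg_apply, map_neg, mul_neg]

lemma twistedCirculant_ite_val_eq_zero :
    twistedCirculant σ π (fun j : Fin n => if (j : ℕ) = 0 then 1 else 0) = 1 := by
  ext i j
  have : NeZero n := ⟨i.pos.ne'⟩
  by_cases hij : i = j
  · subst hij
    simp [twistedCirculant, twistFactor]
  · simp [twistedCirculant, sub_eq_zero, hij]

lemma inv_pow_apply_pow_val_sub {σ : RingAut R} (hσ : σ ^ n = 1) (i k : Fin n) (x : R) :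
    (σ⁻¹ ^ (i : ℕ)) ((σ ^ ((i - k : Fin n) : ℕ)) x) = (σ⁻¹ ^ (k : ℕ)) x := by
  rw [← RingAut.mul_apply, pow_val_sub_of_pow_eq_one hσ, inv_pow, inv_mul_cancel_left, inv_pow]

lemma twistedCirculant_mul (hσ : σ ^ n = 1) (hπ : σ π = π) (a b : Fin n → R) :
    twistedCirculant σ π a * twistedCirculant σ π b =
      twistedCirculant σ π (twistedMul σ π a b) := by
  ext i j
  have : NeZero n := ⟨i.pos.ne'⟩
  simp only [twistedCirculant, twistedMul, Matrix.mul_apply, Matrix.of_apply, map_sum,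
    Finset.mul_sum]
  conv_rhs => rw [← (Equiv.subLeft i).sum_comp]
  refine Finset.sum_congr rfl fun k _ => ?_
  simp only [Equiv.subLeft_apply, sub_sub_sub_cancel_left, map_mul,
    apply_twistFactor (RingAut.inv_pow_apply_eq_self hπ _), inv_pow_apply_pow_val_sub hσ]
  linear_combination (σ⁻¹ ^ (i : ℕ)) (a (i - k)) * (σ⁻¹ ^ (k : ℕ)) (b (k - j)) *
    twistFactor_mul_twistFactor π i j k

end TwistedCirculant

section WittFrobenius

variable {p : ℕ} [Fact p.Prime] {K : Type} [Field K] [Fintype K] [CharP K p]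

lemma wittFrob_pow_apply_coeff (m : ℕ) (x : WittVector p K) (k : ℕ) :
    ((wittFrob p K ^ m) x).coeff k = x.coeff k ^ p ^ m := by
  induction m with
  | zero => simp
  | succ m ih =>
    rw [pow_succ', RingAut.mul_apply, pow_succ, pow_mul, ← ih]
    exact WittVector.map_coeff _ _ _

lemma wittFrob_pow_eq_one {n : ℕ} (hK : Fintype.card K = p ^ n) : wittFrob p K ^ n = 1 := by
  ext x k
  rw [wittFrob_pow_apply_coeff, ← hK, FiniteField.pow_card]
  rfl

lemma twc_eq_twistedCirculant (n : ℕ) :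
    twc p K n = twistedCirculant (wittFrob p K) (p : WittVector p K) := by
  ext a i j
  simp only [twc, twistedCirculant, twistFactor, Matrix.of_apply, Fin.le_def]
  split_ifs <;> simp

end WittFrobenius

theorem twc_subring_general
    (p n : ℕ) [Fact p.Prime]
    (K : Type) [Field K] [Fintype K] [CharP K p] (hK : Fintype.card K = p ^ n) :
    twc p K n (fun j => if (j : ℕ) = 0 then 1 else 0) = 1 ∧
    (∀ a b : Fin n → WittVector p K, twc p K n (a + b) = twc p K n a + twc p K n b) ∧
    (∀ a : Fin n → WittVector p K, twc p K n (-a) = -(twc p K n a)) ∧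
    (∀ a b : Fin n → WittVector p K, ∃ c : Fin n → WittVector p K,
      twc p K n a * twc p K n b = twc p K n c) := by
  have hp : wittFrob p K (p : WittVector p K) = p := map_natCast _ p
  rw [twc_eq_twistedCirculant]
  exact ⟨twistedCirculant_ite_val_eq_zero _ _, twistedCirculant_add _ _,
    twistedCirculant_neg _ _,
    fun a b => ⟨_, twistedCirculant_mul _ _ (wittFrob_pow_eq_one hK) hp a b⟩⟩

/-- The set `D_n = {A(a) : a ∈ Wⁿ}` of twisted-circulant matrices is a subring
of the `n×n` matrix ring over `W`: it contains the identity matrix (which is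
`A(1, 0, …, 0)`), is closed under addition and negation (`A(a) + A(b) = A(a + b)`,
`A(−a) = −A(a)`), and is closed under matrix multiplication. -/
theorem twc_subring
    (p n : ℕ) [Fact p.Prime] (hn : 1 ≤ n)
    (K : Type) [Field K] [Fintype K] [CharP K p] (hK : Fintype.card K = p ^ n) :
    twc p K n (fun j => if (j : ℕ) = 0 then 1 else 0) = 1 ∧
    (∀ a b : Fin n → WittVector p K, twc p K n (a + b) = twc p K n a + twc p K n b) ∧
    (∀ a : Fin n → WittVector p K, twc p K n (-a) = -(twc p K n a)) ∧
    (∀ a b : Fin n → WittVector p K, ∃ c : Fin n → WittVector p K,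
      twc p K n a * twc p K n b = twc p K n c) :=
  twc_subring_general p n K hK
end

section
/- Let S denote the group (under matrix multiplication) of invertible twisted-circulant matrices, S = {A(a) : a ∈ W^n, a_0 ∈ W^×}. The map S → 𝔽_{p^n}^× sending A(a_0, …, a_{n−1}) to π(a_0) is a surjective group homomorphism; its kernel is S⁰ = {A(a) ∈ S : a_0 − 1 ∈ pW} (the strict automorphisms), and the map c ↦ A(e(c), 0, …, 0) is a group-homomorphism splitting, so there is a split short exact sequence S⁰ → S → 𝔽_{p^n}^×. -/
/-!
Every entry of `A(a)` above the diagonal carries a factor `p`, so modulo `p` the first row of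
`A(a)` is `(π(a₀), 0, …, 0)`. Hence the `(0, 0)` entry of a product `A(a) B` reduces to
`π(a₀) π(B₀₀)`, which makes `A ↦ π(A₀₀)` multiplicative on `S`; its kernel is read off from
`ker π = pW`. The Teichmüller lift splits it: `A(e(c), 0, …, 0)` is the diagonal matrix
`diag(σ^{-i}(e(c)))`, which is multiplicative in `c`.
-/

open WittVector

theorem WittVector.constantCoeff_teichmuller {p : ℕ} [Fact p.Prime] {R : Type*} [CommRing R]
    (r : R) : constantCoeff (teichmuller p r) = r := by
  rw [constantCoeff_apply, teichmuller_coeff_zero]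

theorem WittVector.constantCoeff_eq_one_iff_dvd_sub_one {p : ℕ} [Fact p.Prime] {k : Type*}
    [CommRing k] [CharP k p] [PerfectRing k p] (x : WittVector p k) :
    constantCoeff x = 1 ↔ (p : WittVector p k) ∣ x - 1 := by
  rw [← Ideal.mem_span_singleton, ← ker_constantCoeff, RingHom.mem_ker, map_sub, map_one,
    sub_eq_zero]

namespace Matrix

variable {m R T : Type*} [Fintype m] [Semiring R] [Semiring T]

theorem map_mul_apply_of_map_row_eq_zero (f : R →+* T) {A : Matrix m m R} {i : m}
    (hA : ∀ j ≠ i, f (A i j) = 0) (B : Matrix m m R) (k : m) :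
    f ((A * B) i k) = f (A i i) * f (B i k) := by
  rw [mul_apply, map_sum, Finset.sum_eq_single i (fun j _ hj => by rw [map_mul, hA j hj, zero_mul])
    (fun hi => absurd (Finset.mem_univ i) hi), map_mul]

def diagonalEntryHom [DecidableEq m] (f : R →+* T) (i : m) (S : Subgroup (Matrix m m R)ˣ)
    (hS : ∀ U ∈ S, ∀ j ≠ i, f (((U : (Matrix m m R)ˣ) : Matrix m m R) i j) = 0) : S →* Tˣ :=
  MonoidHom.toHomUnits
    { toFun := fun U => f (((U : (Matrix m m R)ˣ) : Matrix m m R) i i)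
      map_one' := by simp
      map_mul' := fun U V => map_mul_apply_of_map_row_eq_zero f (hS U U.2) _ i }

theorem coe_diagonalEntryHom_apply [DecidableEq m] (f : R →+* T) (i : m)
    (S : Subgroup (Matrix m m R)ˣ)
    (hS : ∀ U ∈ S, ∀ j ≠ i, f (((U : (Matrix m m R)ˣ) : Matrix m m R) i j) = 0) (U : S) :
    (diagonalEntryHom f i S hS U : T) = f (((U : (Matrix m m R)ˣ) : Matrix m m R) i i) :=
  rfl

end Matrix

section TwistedCirculant

variable {p : ℕ} [Fact p.Prime] {K : Type} [Field K] [Fintype K] [CharP K p] {n : ℕ}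

theorem twc_apply_zero_zero (hn : 0 < n) (a : Fin n → WittVector p K) :
    twc p K n a ⟨0, hn⟩ ⟨0, hn⟩ = a ⟨0, hn⟩ := by
  have : NeZero n := ⟨hn.ne'⟩
  simp only [twc, Matrix.of_apply, le_refl, if_true, sub_self, pow_zero]
  rfl

theorem constantCoeff_twc_zero_apply_of_ne (hn : 0 < n) (a : Fin n → WittVector p K) {j : Fin n}
    (hj : j ≠ ⟨0, hn⟩) : constantCoeff (twc p K n a ⟨0, hn⟩ j) = 0 := by
  have hj : ¬ (j : ℕ) ≤ ((⟨0, hn⟩ : Fin n) : ℕ) := fun h => hj (Fin.ext (Nat.le_zero.mp h))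
  rw [twc, Matrix.of_apply, if_neg hj, map_mul, map_natCast, CharP.cast_eq_zero, zero_mul]

theorem twc_ite_eq_diagonal (x : WittVector p K) :
    twc p K n (fun j => if (j : ℕ) = 0 then x else 0) =
      Matrix.diagonal fun i : Fin n => ((wittFrob p K)⁻¹ ^ (i : ℕ)) x := by
  refine Matrix.ext fun i j => ?_
  have : NeZero n := ⟨i.pos.ne'⟩
  by_cases h : i = j
  · subst h
    simp [twc]
  · simp [twc, sub_ne_zero.mpr h, h]

variable (p K n) in
noncomputable def twcTeichmuller : K →* Matrix (Fin n) (Fin n) (WittVector p K) :=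
  ((Matrix.diagonalRingHom (Fin n) _).comp
      (RingHom.pi fun i : Fin n => ((wittFrob p K)⁻¹ ^ (i : ℕ)).toRingHom)).toMonoidHom.comp
    (teichmuller p)

theorem twcTeichmuller_apply (c : K) :
    twcTeichmuller p K n c = twc p K n (fun j => if (j : ℕ) = 0 then teichmuller p c else 0) := by
  rw [twc_ite_eq_diagonal]
  rfl

end TwistedCirculant

theorem twc_units_to_residue_field_units_general
    (p n : ℕ) [Fact p.Prime] (hn : 1 ≤ n)
    (K : Type) [Field K] [Fintype K] [CharP K p]
    (S : Subgroup (Matrix (Fin n) (Fin n) (WittVector p K))ˣ)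
    (hS : ∀ U : (Matrix (Fin n) (Fin n) (WittVector p K))ˣ,
      U ∈ S ↔ ∃ a : Fin n → WittVector p K, IsUnit (a ⟨0, hn⟩) ∧
        (U : Matrix (Fin n) (Fin n) (WittVector p K)) = twc p K n a) :
    ∃ φ : S →* Kˣ,
      (∀ (U : S) (a : Fin n → WittVector p K),
        ((U : (Matrix (Fin n) (Fin n) (WittVector p K))ˣ) :
            Matrix (Fin n) (Fin n) (WittVector p K)) = twc p K n a →
        (φ U : K) = WittVector.constantCoeff (a ⟨0, hn⟩)) ∧
      Function.Surjective φ ∧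
      (∀ U : S, φ U = 1 ↔
        ∃ a : Fin n → WittVector p K,
          ((U : (Matrix (Fin n) (Fin n) (WittVector p K))ˣ) :
              Matrix (Fin n) (Fin n) (WittVector p K)) = twc p K n a ∧
          ∃ y : WittVector p K, a ⟨0, hn⟩ - 1 = p * y) ∧
      ∃ s : Kˣ →* S,
        (∀ c : Kˣ, φ (s c) = c) ∧
        ∀ c : Kˣ,
          (((s c : S) : (Matrix (Fin n) (Fin n) (WittVector p K))ˣ) :
              Matrix (Fin n) (Fin n) (WittVector p K)) =
            twc p K n (fun j => if (j : ℕ) = 0 then WittVector.teichmuller p (c : K) else 0) := by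
  have hrow : ∀ U ∈ S, ∀ j ≠ ⟨0, hn⟩,
      constantCoeff ((U : Matrix (Fin n) (Fin n) (WittVector p K)) ⟨0, hn⟩ j) = 0 := by
    intro U hU j hj
    obtain ⟨a, -, hUa⟩ := (hS U).mp hU
    exact hUa ▸ constantCoeff_twc_zero_apply_of_ne hn a hj
  let φ := Matrix.diagonalEntryHom constantCoeff ⟨0, hn⟩ S hrow
  have hφ (U : S) (a : Fin n → WittVector p K)
      (hUa : ((U : (Matrix (Fin n) (Fin n) (WittVector p K))ˣ) :
        Matrix (Fin n) (Fin n) (WittVector p K)) = twc p K n a) :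
      (φ U : K) = constantCoeff (a ⟨0, hn⟩) := by
    rw [Matrix.coe_diagonalEntryHom_apply, hUa, twc_apply_zero_zero]
  have hs_mem (c : Kˣ) : Units.map (twcTeichmuller p K n) c ∈ S :=
    (hS _).mpr ⟨_, by simpa using c.isUnit.map (teichmuller p), twcTeichmuller_apply (c : K)⟩
  let s := (Units.map (twcTeichmuller p K n)).codRestrict S hs_mem
  have hφs (c : Kˣ) : φ (s c) = c := by
    ext
    rw [hφ _ _ (twcTeichmuller_apply _), if_pos rfl, constantCoeff_teichmuller]
  have hker (U : S) (a : Fin n → WittVector p K)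
      (hUa : ((U : (Matrix (Fin n) (Fin n) (WittVector p K))ˣ) :
        Matrix (Fin n) (Fin n) (WittVector p K)) = twc p K n a) :
      φ U = 1 ↔ (p : WittVector p K) ∣ a ⟨0, hn⟩ - 1 := by
    rw [Units.ext_iff, hφ U a hUa, Units.val_one, constantCoeff_eq_one_iff_dvd_sub_one]
  refine ⟨φ, hφ, fun c => ⟨s c, hφs c⟩, fun U => ⟨fun h => ?_, ?_⟩, s, hφs,
    fun c => twcTeichmuller_apply _⟩
  · obtain ⟨a, -, hUa⟩ := (hS U).mp U.2
    exact ⟨a, hUa, (hker U a hUa).mp h⟩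
  · rintro ⟨a, hUa, ha⟩
    exact (hker U a hUa).mpr ha

/-- Let `S` be the group (under matrix multiplication, as a subgroup of the
unit group of the matrix ring) of invertible twisted-circulant matrices
`S = {A(a) : a ∈ Wⁿ, a₀ ∈ W^×}`. The map `S → 𝔽_{p^n}^×` sending `A(a₀, …, a_{n−1})` to
`π(a₀)` is a surjective group homomorphism; its kernel is
`S⁰ = {A(a) ∈ S : a₀ − 1 ∈ pW}` (the strict automorphisms), and `c ↦ A(e(c), 0, …, 0)` is a
group-homomorphism splitting, giving a split short exact sequence `S⁰ → S → 𝔽_{p^n}^×`. -/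
theorem twc_units_to_residue_field_units
    (p n : ℕ) [Fact p.Prime] (hn : 1 ≤ n)
    (K : Type) [Field K] [Fintype K] [CharP K p] (hK : Fintype.card K = p ^ n)
    (S : Subgroup (Matrix (Fin n) (Fin n) (WittVector p K))ˣ)
    (hS : ∀ U : (Matrix (Fin n) (Fin n) (WittVector p K))ˣ,
      U ∈ S ↔ ∃ a : Fin n → WittVector p K, IsUnit (a ⟨0, hn⟩) ∧
        (U : Matrix (Fin n) (Fin n) (WittVector p K)) = twc p K n a) :
    ∃ φ : S →* Kˣ,
      (∀ (U : S) (a : Fin n → WittVector p K),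
        ((U : (Matrix (Fin n) (Fin n) (WittVector p K))ˣ) :
            Matrix (Fin n) (Fin n) (WittVector p K)) = twc p K n a →
        (φ U : K) = WittVector.constantCoeff (a ⟨0, hn⟩)) ∧
      Function.Surjective φ ∧
      (∀ U : S, φ U = 1 ↔
        ∃ a : Fin n → WittVector p K,
          ((U : (Matrix (Fin n) (Fin n) (WittVector p K))ˣ) :
              Matrix (Fin n) (Fin n) (WittVector p K)) = twc p K n a ∧
          ∃ y : WittVector p K, a ⟨0, hn⟩ - 1 = p * y) ∧
      ∃ s : Kˣ →* S,
        (∀ c : Kˣ, φ (s c) = c) ∧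
        ∀ c : Kˣ,
          (((s c : S) : (Matrix (Fin n) (Fin n) (WittVector p K))ˣ) :
              Matrix (Fin n) (Fin n) (WittVector p K)) =
            twc p K n (fun j => if (j : ℕ) = 0 then WittVector.teichmuller p (c : K) else 0) :=
  twc_units_to_residue_field_units_general p n hn K S hS
end
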